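/- Let X₁, …, X_T be measurable spaces and let p and q be probability measures on the product ∏_{t=1}^T X_t obtained by sequential composition of Markov kernels: p has initial law μ₁ and step-t transition kernels κ_t(x_{<t}, ·), and q has initial law ν₁ and step-t transition kernels λ_t(x_{<t}, ·). If TV(μ₁, ν₁) ≤ ε̄₁ and for every t ≥ 2 and every history x_{<t} one has TV(κ_t(x_{<t}, ·), λ_t(x_{<t}, ·)) ≤ ε̄_t, then TV(p, q) ≤ 1 − ∏_{t=1}^T (1 − ε̄_t) ≤ Σ_{t=1}^T ε̄_t. -/

import Mathlib

open MeasureTheory ProbabilityTheory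

/-- Total variation distance between two measures:
`TV(μ, ν) = sup_A |μ(A) - ν(A)|` over measurable sets `A`. -/
noncomputable def tvDist {X : Type*} [MeasurableSpace X] (μ ν : Measure X) : ℝ :=
  ⨆ s : { s : Set X // MeasurableSet s }, |(μ s.1).toReal - (ν s.1).toReal|

/-- The law on `∏ i : Fin (n+1), X i` obtained by sequential composition of an initial law
`μ` on `X 0` with history-dependent transition kernels
`κ t : (∏ i : Fin (t+1), X i) ⇝ X (t+1)`. -/
noncomputable def seqLaw (X : ℕ → Type*) [∀ n, MeasurableSpace (X n)]
    (μ : Measure (X 0)) (κ : (t : ℕ) → Kernel (∀ i : Fin (t + 1), X i) (X (t + 1))) :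
    (n : ℕ) → Measure (∀ i : Fin (n + 1), X i)
  | 0 => μ.map (fun x => Fin.cons x (fun i : Fin 0 => i.elim0))
  | n + 1 => (seqLaw X μ κ n).bind (fun x => ((κ n) x).map (fun y => Fin.snoc x y))

/-!
Couple the two laws step by step. If the histories after `t` steps have been coupled so that
they agree with probability at least `w`, a maximal coupling of the next transition kernels at a
common history keeps them equal with probability at least `1 - ε (t + 1)`, so the histories after
`t + 1` steps agree with probability at least `(1 - ε (t + 1)) w`. In measure-theoretic form the
coupling is the overlap `P ⊓ Q` of the two laws, whose mass is at least `1 - TV(P, Q)`.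
-/

open scoped ENNReal

section TotalVariation

variable {X : Type*} [MeasurableSpace X] {μ ν : Measure X}

lemma tvDist_le {c : ℝ} (h : ∀ s, MeasurableSet s → |(μ s).toReal - (ν s).toReal| ≤ c) :
    tvDist μ ν ≤ c :=
  have : Nonempty { s : Set X // MeasurableSet s } := ⟨⟨∅, .empty⟩⟩
  ciSup_le fun s => h s.1 s.2

lemma abs_sub_le_tvDist [IsFiniteMeasure μ] [IsFiniteMeasure ν] {s : Set X}
    (hs : MeasurableSet s) : |(μ s).toReal - (ν s).toReal| ≤ tvDist μ ν := by
  refine le_ciSup (f := fun t : { s : Set X // MeasurableSet s } =>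
    |(μ t.1).toReal - (ν t.1).toReal|) ⟨(μ Set.univ).toReal + (ν Set.univ).toReal, ?_⟩ ⟨s, hs⟩
  rintro _ ⟨t, rfl⟩
  have hμ := ENNReal.toReal_mono (measure_ne_top μ _) (measure_mono (Set.subset_univ t.1))
  have hν := ENNReal.toReal_mono (measure_ne_top ν _) (measure_mono (Set.subset_univ t.1))
  rw [abs_sub_le_iff]
  constructor <;> linarith [(μ t.1).toReal_nonneg, (ν t.1).toReal_nonneg]

lemma tvDist_nonneg [IsFiniteMeasure μ] [IsFiniteMeasure ν] : 0 ≤ tvDist μ ν :=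
  (abs_nonneg _).trans (abs_sub_le_tvDist MeasurableSet.empty)

lemma tvDist_comm : tvDist μ ν = tvDist ν μ := by
  simp only [tvDist, abs_sub_comm]

lemma tvDist_map_le [IsFiniteMeasure μ] [IsFiniteMeasure ν] {Y : Type*} [MeasurableSpace Y]
    {f : X → Y} (hf : Measurable f) : tvDist (μ.map f) (ν.map f) ≤ tvDist μ ν :=
  tvDist_le fun s hs => by
    rw [Measure.map_apply hf hs, Measure.map_apply hf hs]
    exact abs_sub_le_tvDist (hf hs)

lemma measure_le_add_tvDist [IsFiniteMeasure μ] [IsFiniteMeasure ν] {s : Set X}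
    (hs : MeasurableSet s) : μ s ≤ ν s + ENNReal.ofReal (tvDist μ ν) := by
  have h := (le_abs_self _).trans (abs_sub_le_tvDist (μ := μ) (ν := ν) hs)
  rw [← ENNReal.ofReal_toReal (measure_ne_top μ s), ← ENNReal.ofReal_toReal (measure_ne_top ν s),
    ← ENNReal.ofReal_add ENNReal.toReal_nonneg tvDist_nonneg]
  exact ENNReal.ofReal_le_ofReal (by linarith)

lemma tvDist_le_of_forall_measure_le_add [IsProbabilityMeasure μ] [IsProbabilityMeasure ν]
    {c : ℝ} (hc : 0 ≤ c) (h : ∀ s, MeasurableSet s → μ s ≤ ν s + ENNReal.ofReal c) :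
    tvDist μ ν ≤ c := by
  have h_real : ∀ s, MeasurableSet s → (μ s).toReal ≤ (ν s).toReal + c := fun s hs => by
    simpa [ENNReal.toReal_add, hc] using
      ENNReal.toReal_mono (by finiteness) (h s hs)
  refine tvDist_le fun s hs => abs_sub_le_iff.2 ⟨by linarith [h_real s hs], ?_⟩
  have := h_real sᶜ hs.compl
  rw [prob_compl_eq_one_sub hs, prob_compl_eq_one_sub hs,
    ENNReal.toReal_sub_of_le prob_le_one ENNReal.one_ne_top,
    ENNReal.toReal_sub_of_le prob_le_one ENNReal.one_ne_top] at this
  linarith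

lemma ofReal_one_sub_tvDist_le_inf_univ [IsProbabilityMeasure μ] [IsProbabilityMeasure ν] :
    ENNReal.ofReal (1 - tvDist μ ν) ≤ (μ ⊓ ν) Set.univ := by
  rw [Measure.inf_apply .univ]
  refine le_sInf ?_
  rintro _ ⟨t, rfl⟩
  simp only [Set.inter_univ]
  -- `t` ranges over all sets, so pass to a measurable hull
  set T := toMeasurable μ t
  have hT : MeasurableSet T := measurableSet_toMeasurable μ t
  calc ENNReal.ofReal (1 - tvDist μ ν) ≤ μ T + ν Tᶜ := by
        rw [ENNReal.ofReal_sub _ tvDist_nonneg, ENNReal.ofReal_one, tsub_le_iff_right,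
          prob_compl_eq_one_sub hT, add_right_comm, ← tvDist_comm]
        calc (1 : ℝ≥0∞) ≤ ν T + (1 - ν T) := le_add_tsub
          _ ≤ μ T + ENNReal.ofReal (tvDist ν μ) + (1 - ν T) := by
            gcongr; exact measure_le_add_tvDist hT
    _ ≤ μ t + ν tᶜ := by
        rw [measure_toMeasurable]
        gcongr
        exact subset_toMeasurable μ t

end TotalVariation

section Bind

variable {α β : Type*} [MeasurableSpace α] [MeasurableSpace β]

lemma bind_apply_le_add_of_le {P Q m : Measure α} [IsProbabilityMeasure P] [IsFiniteMeasure m]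
    (hmP : m ≤ P) (hmQ : m ≤ Q) {f g : α → Measure β} (hf : Measurable f) (hg : Measurable g)
    [∀ x, IsProbabilityMeasure (f x)] {e : ℝ≥0∞}
    (hfg : ∀ x s, MeasurableSet s → f x s ≤ g x s + e) {A : Set β} (hA : MeasurableSet A) :
    P.bind f A ≤ Q.bind g A + e * m Set.univ + (1 - m Set.univ) := by
  have hPm : P - m + m = P := Measure.sub_add_cancel_of_le hmP
  calc P.bind f A = ∫⁻ x, f x A ∂(P - m) + ∫⁻ x, f x A ∂m := by
        rw [Measure.bind_apply hA hf.aemeasurable, ← lintegral_add_measure, hPm]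
    _ ≤ ∫⁻ _, 1 ∂(P - m) + ∫⁻ x, (g x A + e) ∂m := by
        gcongr with x x
        · exact prob_le_one
        · exact hfg x A hA
    _ = (1 - m Set.univ) + (∫⁻ x, g x A ∂m + e * m Set.univ) := by
        rw [lintegral_one, Measure.sub_apply .univ hmP, measure_univ,
          lintegral_add_right _ measurable_const, lintegral_const]
    _ ≤ (1 - m Set.univ) + (∫⁻ x, g x A ∂Q + e * m Set.univ) := by
        gcongr
    _ = Q.bind g A + e * m Set.univ + (1 - m Set.univ) := by
        rw [Measure.bind_apply hA hg.aemeasurable]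
        ring

lemma tvDist_bind_le {P Q : Measure α} [IsProbabilityMeasure P] [IsProbabilityMeasure Q]
    {f g : α → Measure β} (hf : Measurable f) (hg : Measurable g)
    [∀ x, IsProbabilityMeasure (f x)] [∀ x, IsProbabilityMeasure (g x)]
    {e : ℝ} (he0 : 0 ≤ e) (he1 : e ≤ 1) (hfg : ∀ x, tvDist (f x) (g x) ≤ e) :
    tvDist (P.bind f) (Q.bind g) ≤ 1 - (1 - e) * (1 - tvDist P Q) := by
  have : IsProbabilityMeasure (P.bind f) :=
    isProbabilityMeasure_bind hf.aemeasurable (.of_forall fun _ => inferInstance)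
  have : IsProbabilityMeasure (Q.bind g) :=
    isProbabilityMeasure_bind hg.aemeasurable (.of_forall fun _ => inferInstance)
  have : IsFiniteMeasure (P ⊓ Q) := isFiniteMeasure_of_le P inf_le_left
  have hδ0 : 0 ≤ tvDist P Q := tvDist_nonneg
  obtain ⟨w, hw0, hw⟩ : ∃ w : ℝ, 0 ≤ w ∧ (P ⊓ Q) Set.univ = ENNReal.ofReal w :=
    ⟨_, ENNReal.toReal_nonneg, (ENNReal.ofReal_toReal (measure_ne_top _ _)).symm⟩
  have hw1 : w ≤ 1 := by
    have := (inf_le_left : P ⊓ Q ≤ P) Set.univ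
    rwa [hw, measure_univ, ← ENNReal.ofReal_one, ENNReal.ofReal_le_ofReal_iff zero_le_one] at this
  have hwδ : 1 - tvDist P Q ≤ w := by
    have := ofReal_one_sub_tvDist_le_inf_univ (μ := P) (ν := Q)
    rwa [hw, ENNReal.ofReal_le_ofReal_iff hw0] at this
  refine tvDist_le_of_forall_measure_le_add (by nlinarith) fun A hA => ?_
  calc P.bind f A ≤ Q.bind g A + ENNReal.ofReal e * (P ⊓ Q) Set.univ + (1 - (P ⊓ Q) Set.univ) :=
        bind_apply_le_add_of_le inf_le_left inf_le_right hf hg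
          (fun x s hs => (measure_le_add_tvDist hs).trans (by gcongr; exact hfg x)) hA
    _ = Q.bind g A + ENNReal.ofReal (e * w + (1 - w)) := by
        rw [add_assoc, hw, ENNReal.ofReal_add (by positivity) (by linarith), ENNReal.ofReal_mul he0,
          ENNReal.ofReal_sub _ hw0, ENNReal.ofReal_one]
    _ ≤ Q.bind g A + ENNReal.ofReal (1 - (1 - e) * (1 - tvDist P Q)) := by
        gcongr
        nlinarith

end Bind

lemma measurable_snoc {n : ℕ} {α : Fin (n + 1) → Type*} [∀ i, MeasurableSpace (α i)] :
    Measurable (Function.uncurry (Fin.snoc (α := α))) := by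
  refine measurable_pi_iff.2 fun i => ?_
  induction i using Fin.lastCases with
  | last => simpa [Function.uncurry] using measurable_snd
  | cast j => simpa [Function.uncurry] using measurable_fst.eval

lemma ProbabilityTheory.Kernel.measurable_map_of_measurable_uncurry {α β γ : Type*}
    [MeasurableSpace α] [MeasurableSpace β] [MeasurableSpace γ] (κ : Kernel α β) [IsSFiniteKernel κ]
    {g : α → β → γ} (hg : Measurable (Function.uncurry g)) :
    Measurable fun x => (κ x).map (g x) := by
  refine Measure.measurable_of_measurable_coe _ fun A hA => ?_
  have h_map (x : α) : (κ x).map (g x) A = κ x (Prod.mk x ⁻¹' (Function.uncurry g ⁻¹' A)) :=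
    Measure.map_apply (hg.comp measurable_prodMk_left) hA
  simp only [h_map]
  exact Kernel.measurable_kernel_prodMk_left (hg hA)

section SeqLaw

variable {X : ℕ → Type*} [∀ n, MeasurableSpace (X n)] {μ ν : Measure (X 0)}
  {κ lam : (t : ℕ) → Kernel (∀ i : Fin (t + 1), X i) (X (t + 1))}

lemma measurable_fin_cons_elim0 : Measurable fun x : X 0 =>
    (Fin.cons x (fun i : Fin 0 => i.elim0) : ∀ i : Fin (0 + 1), X i) :=
  measurable_pi_iff.2 fun i => by fin_cases i; exact measurable_id

lemma seqLaw_zero : seqLaw X μ κ 0 = μ.map fun x => Fin.cons x fun i : Fin 0 => i.elim0 := rfl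

lemma seqLaw_succ (n : ℕ) : seqLaw X μ κ (n + 1) =
    (seqLaw X μ κ n).bind fun x => (κ n x).map fun y => Fin.snoc x y := rfl

lemma measurable_map_snoc {n : ℕ} (η : Kernel (∀ i : Fin (n + 1), X i) (X (n + 1)))
    [IsSFiniteKernel η] :
    Measurable fun x => (η x).map fun y => (Fin.snoc x y : ∀ i : Fin (n + 2), X i) :=
  η.measurable_map_of_measurable_uncurry measurable_snoc

instance isProbabilityMeasure_map_snoc {n : ℕ} (η : Kernel (∀ i : Fin (n + 1), X i) (X (n + 1)))
    [IsMarkovKernel η] (x : ∀ i : Fin (n + 1), X i) :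
    IsProbabilityMeasure ((η x).map fun y => (Fin.snoc x y : ∀ i : Fin (n + 2), X i)) :=
  Measure.isProbabilityMeasure_map (measurable_snoc (α := fun i => X i)).of_uncurry_left.aemeasurable

instance isProbabilityMeasure_seqLaw [IsProbabilityMeasure μ] [∀ t, IsMarkovKernel (κ t)]
    (n : ℕ) : IsProbabilityMeasure (seqLaw X μ κ n) := by
  induction n with
  | zero => exact Measure.isProbabilityMeasure_map measurable_fin_cons_elim0.aemeasurable
  | succ n ih =>
    exact isProbabilityMeasure_bind (measurable_map_snoc (κ n)).aemeasurable
      (.of_forall fun x => inferInstance)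

end SeqLaw

lemma Finset.one_sub_prod_one_sub_le_sum {ι : Type*} (s : Finset ι) {f : ι → ℝ}
    (h0 : ∀ i ∈ s, 0 ≤ f i) (h1 : ∀ i ∈ s, f i ≤ 1) :
    1 - ∏ i ∈ s, (1 - f i) ≤ ∑ i ∈ s, f i := by
  classical
  induction s using Finset.induction_on with
  | empty => simp
  | insert a s ha ih =>
    rw [Finset.prod_insert ha, Finset.sum_insert ha]
    have ih := ih (fun i hi => h0 i (Finset.mem_insert_of_mem hi))
      (fun i hi => h1 i (Finset.mem_insert_of_mem hi))
    have hprod : ∏ i ∈ s, (1 - f i) ≤ 1 := Finset.prod_le_one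
      (fun i hi => sub_nonneg.2 (h1 i (Finset.mem_insert_of_mem hi)))
      (fun i hi => sub_le_self _ (h0 i (Finset.mem_insert_of_mem hi)))
    nlinarith [h0 a (Finset.mem_insert_self a s)]

theorem tvDist_seqLaw_le (X : ℕ → Type*) [∀ n, MeasurableSpace (X n)]
    {μ ν : Measure (X 0)} [IsProbabilityMeasure μ] [IsProbabilityMeasure ν]
    {κ lam : (t : ℕ) → Kernel (∀ i : Fin (t + 1), X i) (X (t + 1))}
    [∀ t, IsMarkovKernel (κ t)] [∀ t, IsMarkovKernel (lam t)] {ε : ℕ → ℝ} {n : ℕ}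
    (hε0 : ∀ t ≤ n, 0 ≤ ε t) (hε1 : ∀ t ≤ n, ε t ≤ 1) (hinit : tvDist μ ν ≤ ε 0)
    (hstep : ∀ t < n, ∀ x, tvDist (κ t x) (lam t x) ≤ ε (t + 1)) :
    tvDist (seqLaw X μ κ n) (seqLaw X ν lam n) ≤ 1 - ∏ t ∈ Finset.range (n + 1), (1 - ε t) := by
  induction n with
  | zero =>
    simpa [seqLaw_zero] using (tvDist_map_le measurable_fin_cons_elim0).trans hinit
  | succ n ih =>
    have ih := ih (fun t ht => hε0 t (by omega)) (fun t ht => hε1 t (by omega))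
      (fun t ht => hstep t (by omega))
    have h_step := tvDist_bind_le (P := seqLaw X μ κ n) (Q := seqLaw X ν lam n)
      (measurable_map_snoc (κ n)) (measurable_map_snoc (lam n)) (hε0 _ le_rfl) (hε1 _ le_rfl)
      fun x => (tvDist_map_le (measurable_snoc (α := fun i => X i)).of_uncurry_left).trans
        (hstep n n.lt_succ_self x)
    rw [seqLaw_succ, seqLaw_succ, Finset.prod_range_succ]
    refine h_step.trans ?_
    nlinarith [hε1 (n + 1) le_rfl]

/-- **Accumulation of local deviations (worst case).** For sequential laws `p = seqLaw μ κ`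
and `q = seqLaw ν lam` on `T = n + 1` coordinates, if `TV(μ, ν) ≤ ε 0` and for every step
`t < n` and every history `x` one has `TV(κ t x, lam t x) ≤ ε (t+1)` (with each `ε t ∈ [0,1]`),
then `TV(p, q) ≤ 1 - ∏ t, (1 - ε t) ≤ ∑ t, ε t`. -/
theorem tv_accumulation_worst_case (X : ℕ → Type*) [∀ n, MeasurableSpace (X n)] (n : ℕ)
    (μ ν : Measure (X 0)) [IsProbabilityMeasure μ] [IsProbabilityMeasure ν]
    (κ lam : (t : ℕ) → Kernel (∀ i : Fin (t + 1), X i) (X (t + 1)))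
    [∀ t, IsMarkovKernel (κ t)] [∀ t, IsMarkovKernel (lam t)]
    (ε : ℕ → ℝ) (hε0 : ∀ t ≤ n, 0 ≤ ε t) (hε1 : ∀ t ≤ n, ε t ≤ 1)
    (hinit : tvDist μ ν ≤ ε 0)
    (hstep : ∀ t < n, ∀ x, tvDist ((κ t) x) ((lam t) x) ≤ ε (t + 1)) :
    (tvDist (seqLaw X μ κ n) (seqLaw X ν lam n) ≤
        1 - ∏ t ∈ Finset.range (n + 1), (1 - ε t)) ∧
      (1 - ∏ t ∈ Finset.range (n + 1), (1 - ε t) ≤ ∑ t ∈ Finset.range (n + 1), ε t) :=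
  ⟨tvDist_seqLaw_le X hε0 hε1 hinit hstep,
    Finset.one_sub_prod_one_sub_le_sum _
      (fun t ht => hε0 t (Nat.lt_succ_iff.1 (Finset.mem_range.1 ht)))
      (fun t ht => hε1 t (Nat.lt_succ_iff.1 (Finset.mem_range.1 ht)))⟩
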